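/- arXiv:2305.09441 — 4 statements merged into one kernel-verified Lean document; each statement's English description precedes it below -/
import Mathlib

section
/- For every integer r ≥ 1 and every vector a ∈ ℝ^r, the mellowmin operator approaches the average operator as the smoothing parameter vanishes: m̃in_k(a) tends to (1/r)·∑_{i} a i as k → 0 from the right. -/
open Real Filter

/-- The mellowmin operator tends to the average as `k → 0⁺`. -/
theorem stmt_7 (r : ℕ) (hr : 1 ≤ r) (a : Fin r → ℝ) :
    Filter.Tendsto
      (fun k : ℝ => -(1 / k) * Real.log ((1 / (r : ℝ)) * ∑ i, Real.exp (-k * a i)))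
      (nhdsWithin 0 (Set.Ioi 0)) (nhds ((1 / (r : ℝ)) * ∑ i, a i)) := by
  have hr' : (r : ℝ) ≠ 0 := by positivity
  set f : ℝ → ℝ := fun k => Real.log ((1 / (r : ℝ)) * ∑ i, Real.exp (-k * a i)) with hf
  have hS0 : (1 / (r : ℝ)) * ∑ i : Fin r, Real.exp (-(0:ℝ) * a i) = 1 := by
    simp [Finset.sum_const, hr']
  have hder : HasDerivAt f (-((1 / (r : ℝ)) * ∑ i, a i)) 0 := by
    have h1 : HasDerivAt (fun k : ℝ => (1 / (r : ℝ)) * ∑ i, Real.exp (-k * a i))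
        ((1 / (r : ℝ)) * ∑ i, (-(a i))) 0 := by
      refine HasDerivAt.const_mul _ (HasDerivAt.fun_sum fun i _ => ?_)
      have h2 : HasDerivAt (fun k : ℝ => -k * a i) (-(a i)) 0 := by
        simpa using (hasDerivAt_id (0:ℝ)).neg.mul_const (a i)
      simpa using h2.exp
    have := h1.log (by rw [hS0]; norm_num)
    rw [hS0] at this
    simpa [hf, neg_mul, one_div, mul_neg, Finset.sum_neg_distrib] using this
  have hslope := hasDerivAt_iff_tendsto_slope.mp hder
  have hslope' : Tendsto (fun k => -slope f 0 k) (nhdsWithin 0 (Set.Ioi 0))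
      (nhds ((1 / (r : ℝ)) * ∑ i, a i)) := by
    have := (hslope.mono_left (nhdsWithin_mono _ (s := Set.Ioi 0) (fun x hx => ne_of_gt hx))).neg
    simpa using this
  refine hslope'.congr' ?_
  filter_upwards [self_mem_nhdsWithin] with k (hk : (0:ℝ) < k)
  have hf0 : f 0 = 0 := by rw [hf]; simp only; rw [hS0]; simp
  rw [slope_def_field, hf0, sub_zero, sub_zero]
  simp only [hf]
  ring
end

section
/- For every integer r ≥ 1 and every vector a ∈ ℝ^r, the mellowmax operator approaches the average operator as the smoothing parameter vanishes: mm_k(a) tends to (1/r)·∑_{i} a i as k → 0 from the right. -/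
open Real Filter

/-- The mellowmax operator tends to the average as `k → 0⁺`. -/
theorem stmt_9 (r : ℕ) (hr : 1 ≤ r) (a : Fin r → ℝ) :
    Filter.Tendsto
      (fun k : ℝ => (1 / k) * Real.log ((1 / (r : ℝ)) * ∑ i, Real.exp (k * a i)))
      (nhdsWithin 0 (Set.Ioi 0)) (nhds ((1 / (r : ℝ)) * ∑ i, a i)) := by
  have hr0 : (r : ℝ) ≠ 0 := by positivity
  have hg : HasDerivAt (fun k : ℝ => (1 / (r:ℝ)) * ∑ i, Real.exp (k * a i))
      ((1/(r:ℝ)) * ∑ i, a i) 0 := by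
    have hsum : HasDerivAt (fun k : ℝ => ∑ i, Real.exp (k * a i)) (∑ i, a i) 0 := by
      have h : ∀ i ∈ Finset.univ, HasDerivAt (fun k : ℝ => Real.exp (k * a i)) (a i) 0 := by
        intro i _
        have := ((hasDerivAt_id (0:ℝ)).mul_const (a i)).exp
        simpa using this
      simpa using HasDerivAt.fun_sum h
    exact hsum.const_mul _
  have hg0 : (1/(r:ℝ)) * ∑ i : Fin r, Real.exp ((0:ℝ) * a i) = 1 := by
    simp [Finset.sum_const]
    field_simp
  set f : ℝ → ℝ := fun k => Real.log ((1/(r:ℝ)) * ∑ i, Real.exp (k * a i)) with hfdef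
  have hf : HasDerivAt f ((1/(r:ℝ)) * ∑ i, a i) 0 := by
    have h1 : (1/(r:ℝ)) * ∑ i, a i
        = ((1/(r:ℝ)) * ∑ i, a i) / ((1/(r:ℝ)) * ∑ i : Fin r, Real.exp ((0:ℝ) * a i)) := by
      rw [hg0, div_one]
    rw [hfdef, h1]
    exact hg.log (by rw [hg0]; norm_num)
  have hslope := hasDerivAt_iff_tendsto_slope.mp hf
  have hmono : nhdsWithin (0:ℝ) (Set.Ioi 0) ≤ nhdsWithin 0 {(0:ℝ)}ᶜ :=
    nhdsWithin_mono _ (fun x hx => ne_of_gt hx)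
  have hslope' := hslope.mono_left hmono
  have heq : ∀ᶠ k in nhdsWithin (0:ℝ) (Set.Ioi 0),
      slope f 0 k = (1 / k) * Real.log ((1 / (r : ℝ)) * ∑ i, Real.exp (k * a i)) := by
    filter_upwards [self_mem_nhdsWithin] with k hk
    have hf0 : f 0 = 0 := by
      have : f 0 = Real.log 1 := by rw [hfdef]; simp only []; rw [hg0]
      simpa using this
    rw [slope_def_field, hf0, sub_zero, sub_zero, div_eq_inv_mul, one_div, hfdef]
  exact (Tendsto.congr' heq hslope')
end

section
/- For every integer r ≥ 1 and every parameter k > 0, the curvature of the mellowmin operator is bounded below by −k times the identity: the function a ↦ m̃in_k(a) + (k/2)·∑_{i} (a i)^2 is convex on all of ℝ^r. -/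
/-!
Restrict to a line `t ↦ x + t • d`. For `S(t) = c ∑ᵢ exp (-k (xᵢ + t dᵢ))`, the second derivative
`(log S)'' = S''/S - (S'/S)²` is a variance for the softmin weights, hence at most
`S''/S ≤ k² ∑ᵢ dᵢ²`. So the mellowmin term has second derivative at least `-k ∑ᵢ dᵢ²`, and the
quadratic term contributes exactly `k ∑ᵢ dᵢ²`.
-/

open Real Finset Set

theorem convexOn_univ_of_hasDerivAt2_nonneg {f f' f'' : ℝ → ℝ}
    (hf : ∀ t, HasDerivAt f (f' t) t) (hf' : ∀ t, HasDerivAt f' (f'' t) t)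
    (hf'' : ∀ t, 0 ≤ f'' t) : ConvexOn ℝ univ f :=
  convexOn_of_hasDerivWithinAt2_nonneg convex_univ
    (fun t _ => (hf t).continuousAt.continuousWithinAt)
    (fun t _ => (hf t).hasDerivWithinAt) (fun t _ => (hf' t).hasDerivWithinAt)
    (fun t _ => hf'' t)

theorem convexOn_univ_of_forall_convexOn_line {E : Type*} [AddCommGroup E] [Module ℝ E]
    {f : E → ℝ} (h : ∀ x v : E, ConvexOn ℝ univ fun t : ℝ => f (x + t • v)) :
    ConvexOn ℝ univ f := by
  refine ⟨convex_univ, fun x _ y _ a b ha hb hab => ?_⟩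
  have key := (h x (y - x)).2 (mem_univ 0) (mem_univ 1) ha hb hab
  have hx : x + b • (y - x) = a • x + b • y := by
    rw [eq_sub_of_add_eq hab, sub_smul, one_smul, smul_sub]; abel
  simpa [hx] using key

theorem sum_mul_sq_le_sum_sq_mul_sum {ι : Type*} [Fintype ι] {w : ι → ℝ} (hw : ∀ i, 0 ≤ w i)
    (d : ι → ℝ) : ∑ i, w i * d i ^ 2 ≤ (∑ j, d j ^ 2) * ∑ i, w i := by
  rw [mul_sum]
  refine sum_le_sum fun i _ => ?_
  rw [mul_comm]
  exact mul_le_mul_of_nonneg_right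
    (single_le_sum (fun j _ => sq_nonneg (d j)) (mem_univ i)) (hw i)

theorem hasDerivAt_line (x d t : ℝ) : HasDerivAt (fun t => x + t * d) d t := by
  simpa using ((hasDerivAt_id t).mul_const d).const_add x

theorem hasDerivAt_exp_line (k x d t : ℝ) :
    HasDerivAt (fun t => exp (-k * (x + t * d))) (exp (-k * (x + t * d)) * (-k * d)) t := by
  simpa using ((((hasDerivAt_id t).mul_const d).const_add x).const_mul (-k)).exp

section Line

variable {ι : Type*} [Fintype ι] (k : ℝ) (x d : ι → ℝ)

theorem hasDerivAt_half_mul_sum_sq_line (t : ℝ) :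
    HasDerivAt (fun t => (k / 2) * ∑ i, (x i + t * d i) ^ 2)
      (k * ∑ i, (x i + t * d i) * d i) t := by
  refine ((HasDerivAt.fun_sum (u := univ) fun i _ =>
    (hasDerivAt_line (x i) (d i) t).fun_pow 2).const_mul (k / 2)).congr_deriv ?_
  simp only [mul_sum]
  refine sum_congr rfl fun i _ => ?_
  ring

theorem hasDerivAt_mul_sum_mul_line (t : ℝ) :
    HasDerivAt (fun t => k * ∑ i, (x i + t * d i) * d i) (k * ∑ i, d i ^ 2) t := by
  refine ((HasDerivAt.fun_sum (u := univ) fun i _ =>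
    (hasDerivAt_line (x i) (d i) t).mul_const (d i)).const_mul k).congr_deriv ?_
  simp only [sq]

theorem convexOn_univ_neg_log_sum_exp_line_add_sq [Nonempty ι] (hk : 0 < k) {c : ℝ}
    (hc : 0 < c) :
    ConvexOn ℝ univ fun t : ℝ =>
      -(1 / k) * log (c * ∑ i, exp (-k * (x i + t * d i))) + (k / 2) * ∑ i, (x i + t * d i) ^ 2 := by
  set e : ι → ℝ → ℝ := fun i t => exp (-k * (x i + t * d i))
  set S : ℝ → ℝ := fun t => c * ∑ i, e i t
  set S' : ℝ → ℝ := fun t => c * ∑ i, e i t * (-k * d i)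
  set S'' : ℝ → ℝ := fun t => c * ∑ i, e i t * (-k * d i) * (-k * d i)
  set D := ∑ i, d i ^ 2
  have hS_pos (t : ℝ) : 0 < S t :=
    mul_pos hc (sum_pos (fun i _ => exp_pos _) univ_nonempty)
  have hS (t : ℝ) : HasDerivAt S (S' t) t :=
    (HasDerivAt.fun_sum fun i _ => hasDerivAt_exp_line k (x i) (d i) t).const_mul c
  have hS' (t : ℝ) : HasDerivAt S' (S'' t) t :=
    (HasDerivAt.fun_sum fun i _ =>
      (hasDerivAt_exp_line k (x i) (d i) t).mul_const (-k * d i)).const_mul c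
  have hS''_le (t : ℝ) : S'' t ≤ k ^ 2 * D * S t := by
    calc S'' t = k ^ 2 * c * ∑ i, e i t * d i ^ 2 := by
          simp only [S'', mul_sum]; refine sum_congr rfl fun i _ => ?_; ring
      _ ≤ k ^ 2 * c * (D * ∑ i, e i t) := by
          gcongr; exact sum_mul_sq_le_sum_sq_mul_sum (fun i => (exp_pos _).le) d
      _ = k ^ 2 * D * S t := by ring
  refine convexOn_univ_of_hasDerivAt2_nonneg
    (fun t => (((hS t).log (hS_pos t).ne').const_mul (-(1 / k))).add
      (hasDerivAt_half_mul_sum_sq_line k x d t))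
    (fun t => (((hS' t).div (hS t) (hS_pos t).ne').const_mul (-(1 / k))).add
      (hasDerivAt_mul_sum_mul_line k x d t))
    fun t => ?_
  have hlog'' : (S'' t * S t - S' t * S' t) / S t ^ 2 ≤ k ^ 2 * D := by
    rw [div_le_iff₀ (pow_pos (hS_pos t) 2)]
    nlinarith [mul_le_mul_of_nonneg_right (hS''_le t) (hS_pos t).le, mul_self_nonneg (S' t)]
  calc 0 = -(1 / k) * (k ^ 2 * D) + k * D := by field_simp; ring
    _ ≤ _ := by rw [neg_mul, neg_mul]; gcongr

end Line

/-- Semiconvexity of the mellowmin operator: its curvature is bounded below by `-k`,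
i.e. `a ↦ mellowmin k a + (k/2) * ‖a‖²` is convex on all of `ℝ^r`. -/
theorem stmt_10 (r : ℕ) (hr : 1 ≤ r) (k : ℝ) (hk : 0 < k) :
    ConvexOn ℝ Set.univ
      (fun a : Fin r → ℝ =>
        (-(1 / k) * Real.log ((1 / (r : ℝ)) * ∑ i, Real.exp (-k * a i)))
          + (k / 2) * ∑ i, (a i) ^ 2) := by
  have : Nonempty (Fin r) := Fin.pos_iff_nonempty.mp hr
  exact convexOn_univ_of_forall_convexOn_line fun x v =>
    convexOn_univ_neg_log_sum_exp_line_add_sq k x v hk (by positivity)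
end

section
/- For every integer r ≥ 1 and every parameter k > 0, the curvature of the mellowmax operator is bounded above by k times the identity: the function a ↦ (k/2)·∑_{i} (a i)^2 − mm_k(a) is convex on all of ℝ^r. -/
open Real

private lemma line_convex (r : ℕ) (hr : 1 ≤ r) (k : ℝ) (hk : 0 < k) (x d : Fin r → ℝ) :
    ConvexOn ℝ Set.univ
      (fun u : ℝ =>
        (k / 2) * ∑ i, (x i + u * d i) ^ 2
          - (1 / k) * Real.log (∑ i, Real.exp (k * (x i + u * d i)))) := by
  haveI : Nonempty (Fin r) := Fin.pos_iff_nonempty.mp hr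
  set g : ℝ → ℝ := fun u => ∑ i, Real.exp (k * (x i + u * d i)) with hgdef
  set g1 : ℝ → ℝ := fun u => ∑ i, (k * d i) * Real.exp (k * (x i + u * d i)) with hg1def
  set g2 : ℝ → ℝ := fun u => ∑ i, (k * d i) ^ 2 * Real.exp (k * (x i + u * d i)) with hg2def
  have hgpos : ∀ u, 0 < g u := fun u =>
    Finset.sum_pos (fun i _ => Real.exp_pos _) Finset.univ_nonempty
  have hinner : ∀ (i : Fin r) (u : ℝ),
      HasDerivAt (fun u => k * (x i + u * d i)) (k * d i) u := by
    intro i u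
    have : HasDerivAt (fun u : ℝ => x i + u * d i) (d i) u := by
      simpa using ((hasDerivAt_id u).mul_const (d i)).const_add (x i)
    simpa [mul_comm] using this.const_mul k
  have hg : ∀ u, HasDerivAt g (g1 u) u := by
    intro u
    apply HasDerivAt.fun_sum
    intro i _
    simpa [mul_comm] using ((hinner i u).exp)
  have hg1 : ∀ u, HasDerivAt g1 (g2 u) u := by
    intro u
    apply HasDerivAt.fun_sum
    intro i _
    have := ((hinner i u).exp).const_mul (k * d i)
    simpa [pow_two, mul_comm, mul_assoc, mul_left_comm] using this
  set Q : ℝ → ℝ := fun u => ∑ i, (x i + u * d i) ^ 2 with hQdef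
  set Q1 : ℝ → ℝ := fun u => ∑ i, 2 * (x i + u * d i) * d i with hQ1def
  have hQ : ∀ u, HasDerivAt Q (Q1 u) u := by
    intro u
    apply HasDerivAt.fun_sum
    intro i _
    have h0 : HasDerivAt (fun u : ℝ => x i + u * d i) (d i) u := by
      simpa using ((hasDerivAt_id u).mul_const (d i)).const_add (x i)
    simpa [pow_two, mul_comm, mul_assoc, mul_left_comm] using h0.fun_pow 2
  have hQ1 : ∀ u, HasDerivAt Q1 (∑ i, 2 * d i ^ 2) u := by
    intro u
    apply HasDerivAt.fun_sum
    intro i _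
    have h0 : HasDerivAt (fun u : ℝ => x i + u * d i) (d i) u := by
      simpa using ((hasDerivAt_id u).mul_const (d i)).const_add (x i)
    have := (h0.const_mul 2).mul_const (d i)
    simpa [pow_two, mul_comm, mul_assoc, mul_left_comm] using this
  set f : ℝ → ℝ := fun u => (k / 2) * Q u - (1 / k) * Real.log (g u) with hfdef
  set f1 : ℝ → ℝ := fun u => (k / 2) * Q1 u - (1 / k) * (g1 u / g u) with hf1def
  set f2 : ℝ → ℝ := fun u =>
    (k / 2) * (∑ i, 2 * d i ^ 2) - (1 / k) * ((g2 u * g u - g1 u * g1 u) / (g u) ^ 2)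
    with hf2def
  have hf : ∀ u, HasDerivAt f (f1 u) u := by
    intro u
    exact (((hQ u).const_mul (k / 2)).sub
      (((hg u).log (hgpos u).ne').const_mul (1 / k)))
  have hf1 : ∀ u, HasDerivAt f1 (f2 u) u := by
    intro u
    have hdiv : HasDerivAt (fun u => g1 u / g u)
        ((g2 u * g u - g1 u * g1 u) / (g u) ^ 2) u :=
      (hg1 u).div (hg u) (hgpos u).ne'
    exact ((hQ1 u).const_mul (k / 2)).sub (hdiv.const_mul (1 / k))
  have hf2nonneg : ∀ u, 0 ≤ f2 u := by
    intro u
    have hgu := hgpos u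
    have h1 : g2 u ≤ (∑ i, k ^ 2 * d i ^ 2) * g u := by
      rw [Finset.sum_mul]
      apply Finset.sum_le_sum
      intro i _
      have hexp : Real.exp (k * (x i + u * d i)) ≤ g u :=
        Finset.single_le_sum (f := fun j => Real.exp (k * (x j + u * d j)))
          (fun j _ => (Real.exp_pos _).le) (Finset.mem_univ i)
      calc (k * d i) ^ 2 * Real.exp (k * (x i + u * d i))
          ≤ (k * d i) ^ 2 * g u := by
            exact mul_le_mul_of_nonneg_left hexp (sq_nonneg _)
        _ = k ^ 2 * d i ^ 2 * g u := by ring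
    have h2 : (g2 u * g u - g1 u * g1 u) / (g u) ^ 2 ≤ ∑ i, k ^ 2 * d i ^ 2 := by
      rw [div_le_iff₀ (by positivity)]
      nlinarith [mul_nonneg (mul_self_nonneg (g1 u)) (le_of_lt hgu),
        mul_le_mul_of_nonneg_right h1 hgu.le, sq_nonneg (g u), mul_pos hgu hgu]
    have : (1 / k) * ((g2 u * g u - g1 u * g1 u) / (g u) ^ 2)
        ≤ (1 / k) * (∑ i, k ^ 2 * d i ^ 2) :=
      mul_le_mul_of_nonneg_left h2 (by positivity)
    have heq : (k / 2) * (∑ i, 2 * d i ^ 2) = (1 / k) * (∑ i, k ^ 2 * d i ^ 2) := by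
      rw [Finset.mul_sum, Finset.mul_sum]
      apply Finset.sum_congr rfl
      intro i _
      field_simp
    simp only [hf2def]
    rw [heq]
    linarith
  have hderiv1 : deriv f = f1 := funext fun u => (hf u).deriv
  have key : ConvexOn ℝ Set.univ f := by
    apply convexOn_of_deriv2_nonneg convex_univ
    · exact fun u _ => ((hf u).continuousAt).continuousWithinAt
    · intro u _
      exact ((hf u).differentiableAt).differentiableWithinAt
    · intro u _
      rw [hderiv1]
      exact ((hf1 u).differentiableAt).differentiableWithinAt
    · intro u _
      have : deriv^[2] f u = deriv (deriv f) u := rfl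
      rw [this, hderiv1, (hf1 u).deriv]
      exact hf2nonneg u
  exact key

/-- Semiconcavity of the mellowmax operator: its curvature is bounded above by `k`,
i.e. `a ↦ (k/2) * ‖a‖² - mm_k a` is convex on all of `ℝ^r`. -/
theorem stmt_11 (r : ℕ) (hr : 1 ≤ r) (k : ℝ) (hk : 0 < k) :
    ConvexOn ℝ Set.univ
      (fun a : Fin r → ℝ =>
        (k / 2) * ∑ i, (a i) ^ 2
          - (1 / k) * Real.log ((1 / (r : ℝ)) * ∑ i, Real.exp (k * a i))) := by
  haveI : Nonempty (Fin r) := Fin.pos_iff_nonempty.mp hr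
  have hrpos : (0 : ℝ) < (r : ℝ) := by exact_mod_cast hr
  have hsum : ∀ a : Fin r → ℝ, 0 < ∑ i, Real.exp (k * a i) := fun a =>
    Finset.sum_pos (fun i _ => Real.exp_pos _) Finset.univ_nonempty
  have hsplit : ∀ a : Fin r → ℝ,
      (k / 2) * ∑ i, (a i) ^ 2
          - (1 / k) * Real.log ((1 / (r : ℝ)) * ∑ i, Real.exp (k * a i))
        = ((k / 2) * ∑ i, (a i) ^ 2
          - (1 / k) * Real.log (∑ i, Real.exp (k * a i)))
          + (-(1 / k) * Real.log (1 / (r : ℝ))) := by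
    intro a
    rw [Real.log_mul (by positivity) (hsum a).ne']
    ring
  constructor
  · exact convex_univ
  · intro xv _ yv _ p q hp hq hpq
    have hline := line_convex r hr k hk xv (fun i => yv i - xv i)
    have := hline.2 (Set.mem_univ (0:ℝ)) (Set.mem_univ (1:ℝ)) hp hq hpq
    simp only [smul_eq_mul, mul_zero, mul_one, zero_add, zero_mul, add_zero] at this
    have h0 : ∀ i, xv i + (0:ℝ) * (yv i - xv i) = xv i := by intro i; ring
    have h1 : ∀ i, xv i + (1:ℝ) * (yv i - xv i) = yv i := by intro i; ring
    have hq' : ∀ i, xv i + q * (yv i - xv i) = (p • xv + q • yv) i := by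
      intro i
      simp only [Pi.add_apply, Pi.smul_apply, smul_eq_mul]
      have : p = 1 - q := by linarith
      rw [this]; ring
    simp only [h0, h1] at this
    simp only [smul_eq_mul]
    rw [hsplit (p • xv + q • yv), hsplit xv, hsplit yv]
    have hc : p * (-(1 / k) * Real.log (1 / (r : ℝ)))
        + q * (-(1 / k) * Real.log (1 / (r : ℝ)))
        = -(1 / k) * Real.log (1 / (r : ℝ)) := by
      rw [← add_mul, hpq, one_mul]
    have hrw : (fun i => xv i + q * (yv i - xv i)) = fun i => (p • xv + q • yv) i :=
      funext hq'
    rw [show (∑ i, (xv i + q * (yv i - xv i)) ^ 2) = ∑ i, ((p • xv + q • yv) i) ^ 2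
        from Finset.sum_congr rfl (fun i _ => by rw [hq' i]),
      show (∑ i, Real.exp (k * (xv i + q * (yv i - xv i))))
        = ∑ i, Real.exp (k * ((p • xv + q • yv) i))
        from Finset.sum_congr rfl (fun i _ => by rw [hq' i])] at this
    nlinarith [this]
end
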